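/- Let ν ∈ {1, 2} and let V : ℤ^ν → ℝ be bounded. If the spectrum of H₀ + V is contained in [−2ν, 2ν], then V(n) = 0 for all n ∈ ℤ^ν. -/

import Mathlib

noncomputable section

open scoped ComplexConjugate

namespace DHKS

/-- The Hilbert space ℓ²(α; ℂ). -/
abbrev L2 (α : Type*) := lp (fun _ : α => ℂ) 2

variable {α β : Type*}

lemma memℓp_two_iff (f : α → ℂ) :
    Memℓp f 2 ↔ Summable (fun n => ‖f n‖ ^ (2 : ℝ)) := by
  rw [memℓp_gen_iff (by norm_num)]
  norm_num

lemma sum_sq_le (u : L2 α) (s : Finset α) :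
    ∑ n ∈ s, ‖(u : α → ℂ) n‖ ^ (2:ℝ) ≤ ‖u‖ ^ (2:ℝ) := by
  simpa using lp.sum_rpow_le_norm_rpow (p := 2) (by norm_num) u s

lemma norm_le_of_sum_sq (u : L2 α) {C : ℝ} (hC : 0 ≤ C)
    (h : ∀ s : Finset α, ∑ n ∈ s, ‖(u : α → ℂ) n‖ ^ (2:ℝ) ≤ C ^ (2:ℝ)) : ‖u‖ ≤ C := by
  refine lp.norm_le_of_forall_sum_le (p := 2) (by norm_num) hC ?_
  simpa using h

/-- Composition with an injective map, as a continuous linear map on ℓ². -/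
def compOp (σ : α → β) (hσ : Function.Injective σ) : L2 β →L[ℂ] L2 α :=
  LinearMap.mkContinuous
    { toFun := fun u => ⟨fun n => (u : β → ℂ) (σ n), by
        apply (memℓp_two_iff _).2
        exact ((memℓp_two_iff _).1 (lp.memℓp u)).comp_injective hσ⟩
      map_add' := by
        intro u v; apply lp.ext; funext n
        simp only [lp.coeFn_add, Pi.add_apply]
      map_smul' := by
        intro c u; apply lp.ext; funext n
        simp only [lp.coeFn_smul, Pi.smul_apply, RingHom.id_apply] }
    1 (by
      intro u
      rw [one_mul]
      refine norm_le_of_sum_sq _ (norm_nonneg u) (fun s => ?_)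
      classical
      calc ∑ n ∈ s, ‖(u : β → ℂ) (σ n)‖ ^ (2:ℝ)
          = ∑ m ∈ s.image σ, ‖(u : β → ℂ) m‖ ^ (2:ℝ) := by
            rw [Finset.sum_image (fun a _ b _ h => hσ h)]
        _ ≤ ‖u‖ ^ (2:ℝ) := sum_sq_le u _)

@[simp] lemma compOp_apply (σ : α → β) (hσ : Function.Injective σ) (u : L2 β) (n : α) :
    (compOp σ hσ u : α → ℂ) n = (u : β → ℂ) (σ n) := rfl

/-- Multiplication by a bounded real-valued function, as a continuous linear map on ℓ². -/
def mulOp (V : α → ℝ) (C : ℝ) (hC : ∀ n, |V n| ≤ C) : L2 α →L[ℂ] L2 α :=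
  LinearMap.mkContinuous
    { toFun := fun u => ⟨fun n => (V n : ℂ) * (u : α → ℂ) n, by
        apply (memℓp_two_iff _).2
        have h := (((memℓp_two_iff _).1 (lp.memℓp u)).mul_left ((max C 0) ^ (2:ℝ)))
        apply Summable.of_nonneg_of_le (fun n => by positivity) (fun n => ?_) h
        have h1 : ‖(V n : ℂ) * (u : α → ℂ) n‖ = |V n| * ‖(u : α → ℂ) n‖ := by
          rw [norm_mul, Complex.norm_real, Real.norm_eq_abs]
        rw [h1, Real.mul_rpow (abs_nonneg _) (norm_nonneg _)]
        have h3 : |V n| ^ (2:ℝ) ≤ (max C 0) ^ (2:ℝ) :=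
          Real.rpow_le_rpow (abs_nonneg _) (le_max_of_le_left (hC n)) (by norm_num)
        exact mul_le_mul_of_nonneg_right h3 (by positivity)⟩
      map_add' := by
        intro u v; apply lp.ext; funext n
        simp only [lp.coeFn_add, Pi.add_apply]
        ring
      map_smul' := by
        intro c u; apply lp.ext; funext n
        simp only [lp.coeFn_smul, Pi.smul_apply, RingHom.id_apply, smul_eq_mul]
        ring }
    (max C 0) (by
      intro u
      refine norm_le_of_sum_sq _ (by positivity) (fun s => ?_)
      have key : ∀ n ∈ s, ‖(V n : ℂ) * (u : α → ℂ) n‖ ^ (2:ℝ)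
          ≤ (max C 0) ^ (2:ℝ) * ‖(u : α → ℂ) n‖ ^ (2:ℝ) := by
        intro n _
        have h1 : ‖(V n : ℂ) * (u : α → ℂ) n‖ = |V n| * ‖(u : α → ℂ) n‖ := by
          rw [norm_mul, Complex.norm_real, Real.norm_eq_abs]
        rw [h1, Real.mul_rpow (abs_nonneg _) (norm_nonneg _)]
        have h3 : |V n| ^ (2:ℝ) ≤ (max C 0) ^ (2:ℝ) :=
          Real.rpow_le_rpow (abs_nonneg _) (le_max_of_le_left (hC n)) (by norm_num)
        exact mul_le_mul_of_nonneg_right h3 (by positivity)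
      calc ∑ n ∈ s, ‖(V n : ℂ) * (u : α → ℂ) n‖ ^ (2:ℝ)
          ≤ ∑ n ∈ s, (max C 0) ^ (2:ℝ) * ‖(u : α → ℂ) n‖ ^ (2:ℝ) := Finset.sum_le_sum key
        _ = (max C 0) ^ (2:ℝ) * ∑ n ∈ s, ‖(u : α → ℂ) n‖ ^ (2:ℝ) := by rw [Finset.mul_sum]
        _ ≤ (max C 0) ^ (2:ℝ) * ‖u‖ ^ (2:ℝ) :=
            mul_le_mul_of_nonneg_left (sum_sq_le u _) (by positivity)
        _ = (max C 0 * ‖u‖) ^ (2:ℝ) :=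
            (Real.mul_rpow (le_max_right _ _) (norm_nonneg _)).symm)

@[simp] lemma mulOp_apply (V : α → ℝ) (C : ℝ) (hC : ∀ n, |V n| ≤ C) (u : L2 α) (n : α) :
    (mulOp V C hC u : α → ℂ) n = (V n : ℂ) * (u : α → ℂ) n := rfl

/-- Extension by zero along an injective map, as a continuous linear map on ℓ². -/
def extOp (σ : α → β) (hσ : Function.Injective σ) : L2 α →L[ℂ] L2 β :=
  LinearMap.mkContinuous
    { toFun := fun u => ⟨Function.extend σ (u : α → ℂ) 0, by
        apply (memℓp_two_iff _).2
        have hpt : (fun b => ‖Function.extend σ (u : α → ℂ) 0 b‖ ^ (2:ℝ))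
            = Function.extend σ (fun a => ‖(u : α → ℂ) a‖ ^ (2:ℝ)) 0 := by
          funext b
          rcases em (∃ a, σ a = b) with ⟨a, rfl⟩ | hb
          · rw [hσ.extend_apply, hσ.extend_apply]
          · rw [Function.extend_apply' _ _ _ hb, Function.extend_apply' _ _ _ hb]
            simp [Real.zero_rpow (by norm_num : (2:ℝ) ≠ 0)]
        rw [hpt, summable_extend_zero hσ]
        exact (memℓp_two_iff _).1 (lp.memℓp u)⟩
      map_add' := by
        intro u v; apply lp.ext; funext b
        simp only [lp.coeFn_add, Pi.add_apply]
        rcases em (∃ a, σ a = b) with ⟨a, rfl⟩ | hb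
        · rw [hσ.extend_apply, hσ.extend_apply, hσ.extend_apply]
          simp [lp.coeFn_add]
        · rw [Function.extend_apply' _ _ _ hb, Function.extend_apply' _ _ _ hb,
            Function.extend_apply' _ _ _ hb]
          simp
      map_smul' := by
        intro c u; apply lp.ext; funext b
        simp only [lp.coeFn_smul, Pi.smul_apply, RingHom.id_apply, smul_eq_mul]
        rcases em (∃ a, σ a = b) with ⟨a, rfl⟩ | hb
        · rw [hσ.extend_apply, hσ.extend_apply]
          simp [lp.coeFn_smul]
        · rw [Function.extend_apply' _ _ _ hb, Function.extend_apply' _ _ _ hb]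
          simp }
    1 (by
      intro u
      rw [one_mul]
      refine norm_le_of_sum_sq _ (norm_nonneg u) (fun s => ?_)
      have hpt : (fun b => ‖Function.extend σ (u : α → ℂ) 0 b‖ ^ (2:ℝ))
          = Function.extend σ (fun a => ‖(u : α → ℂ) a‖ ^ (2:ℝ)) 0 := by
        funext b
        rcases em (∃ a, σ a = b) with ⟨a, rfl⟩ | hb
        · rw [hσ.extend_apply, hσ.extend_apply]
        · rw [Function.extend_apply' _ _ _ hb, Function.extend_apply' _ _ _ hb]
          simp [Real.zero_rpow (by norm_num : (2:ℝ) ≠ 0)]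
      have hsumm : Summable (fun a => ‖(u : α → ℂ) a‖ ^ (2:ℝ)) :=
        (memℓp_two_iff _).1 (lp.memℓp u)
      calc ∑ b ∈ s, ‖Function.extend σ (u : α → ℂ) 0 b‖ ^ (2:ℝ)
          ≤ ∑' b, ‖Function.extend σ (u : α → ℂ) 0 b‖ ^ (2:ℝ) := by
            refine Summable.sum_le_tsum s (fun b _ => by positivity) ?_
            rw [hpt, summable_extend_zero hσ]; exact hsumm
        _ = ∑' a, ‖(u : α → ℂ) a‖ ^ (2:ℝ) := by
            rw [hpt, tsum_extend_zero hσ]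
        _ = ‖u‖ ^ (2:ℝ) := by
            simpa using (lp.norm_rpow_eq_tsum (p := 2) (by norm_num) u).symm)

lemma extOp_apply (σ : α → β) (hσ : Function.Injective σ) (u : L2 α) (b : β) :
    (extOp σ hσ u : β → ℂ) b = Function.extend σ (u : α → ℂ) 0 b := rfl

/-- The real quadratic form ⟨φ, A φ⟩ of an operator. -/
def quadForm (A : L2 α →L[ℂ] L2 α) (φ : L2 α) : ℝ :=
  (inner ℂ φ (A φ) : ℂ).re

/-- `E` is an eigenvalue of the bounded operator `A`. -/
def IsEigenvalue (A : L2 α →L[ℂ] L2 α) (E : ℝ) : Prop :=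
  ∃ u : L2 α, u ≠ 0 ∧ A u = (E : ℂ) • u

lemma abs_mul_sq_le {γ x Cb : ℝ} (h : |x| ≤ Cb) : |γ * x ^ 2| ≤ |γ| * Cb ^ 2 := by
  have h1 := abs_le.1 h
  rw [abs_mul, abs_of_nonneg (sq_nonneg x)]
  exact mul_le_mul_of_nonneg_left (sq_le_sq' (by linarith [h1.1]) h1.2) (abs_nonneg γ)

end DHKS

namespace DHKS

/-! ## The lattice ℤ^ν -/

/-- The lattice `ℤ^ν`. -/
abbrev Zlat (ν : ℕ) := Fin ν → ℤ

/-- The ℓ¹-norm `|n|₁ = |n₁| + ⋯ + |n_ν|` of a lattice point. -/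
def normOne {ν : ℕ} (n : Zlat ν) : ℕ := ∑ i, (n i).natAbs

/-- The `i`-th standard unit vector in `ℤ^ν`. -/
def unitVec (ν : ℕ) (i : Fin ν) : Zlat ν := fun k => if k = i then 1 else 0

/-- The free discrete Schrödinger operator `(H₀ u)(n) = ∑_{|j|₁ = 1} u(n+j)`
on `ℓ²(ℤ^ν)`, written as the sum over translations by `± eᵢ`. -/
def H0 (ν : ℕ) : L2 (Zlat ν) →L[ℂ] L2 (Zlat ν) :=
  ∑ i : Fin ν,
    (compOp (fun n => n + unitVec ν i) (add_left_injective _) +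
      compOp (fun n => n + (-unitVec ν i)) (add_left_injective _))

lemma H0_apply {ν : ℕ} (u : L2 (Zlat ν)) (n : Zlat ν) :
    (H0 ν u : Zlat ν → ℂ) n =
      ∑ i : Fin ν, ((u : Zlat ν → ℂ) (n + unitVec ν i) + (u : Zlat ν → ℂ) (n - unitVec ν i)) := by
  rw [H0, ContinuousLinearMap.sum_apply, lp.coeFn_sum, Finset.sum_apply]
  simp [sub_eq_add_neg]

/-- The unitary `(U φ)(n) = (-1)^{|n|₁} φ(n)`. -/
def Uop (ν : ℕ) : L2 (Zlat ν) →L[ℂ] L2 (Zlat ν) :=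
  mulOp (fun n => (-1 : ℝ) ^ normOne n) 1 (fun n => by simp [abs_pow])

/-- The discrete Schrödinger operator `H = H₀ + V` on `ℓ²(ℤ^ν)`. -/
def schrodinger (ν : ℕ) (V : Zlat ν → ℝ) (C : ℝ) (hC : ∀ n, |V n| ≤ C) :
    L2 (Zlat ν) →L[ℂ] L2 (Zlat ν) :=
  H0 ν + mulOp V C hC

/-- The quantity `Δ(φ₊, φ₋; V) = ⟨φ₊, (H-2ν)φ₊⟩ + ⟨φ₋, (-H-2ν)φ₋⟩`. -/
def Delta (ν : ℕ) (V : Zlat ν → ℝ) (C : ℝ) (hC : ∀ n, |V n| ≤ C)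
    (φp φm : L2 (Zlat ν)) : ℝ :=
  quadForm (schrodinger ν V C hC - ((2 * (ν:ℝ) : ℝ) : ℂ) • 1) φp +
    quadForm (-schrodinger ν V C hC - ((2 * (ν:ℝ) : ℝ) : ℂ) • 1) φm

end DHKS

/-!
Since `H = H₀ + V` is self-adjoint, `σ(H) ⊆ [-2ν, 2ν]` gives `‖H‖ ≤ 2ν`, and conjugating by the
parity `(-1)^{|n|₁}` (which anticommutes with `H₀` and commutes with `V`) gives `‖V - H₀‖ ≤ 2ν`.
Hence `|⟨u, V u⟩| ≤ ⟨u, (2ν - H₀) u⟩ = ∑ᵢ ‖u(· + eᵢ) - u‖²` for every `u`, and polarizing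
between `δ_{n₀}` and a vector `ψ` gives `(ψ(n₀) V(n₀))² ≤ ⟨ψ, (2ν - H₀) ψ⟩ ⟨δ, (2ν - H₀) δ⟩`.
For `ν ≤ 2` the lattice is recurrent: the radial profile `ψ(n) = ∑_{|n - n₀|₁ ≤ k < R} 1/(k+1)`
has `ψ(n₀) ~ log R` but energy only `O(ψ(n₀))`, because a sphere of radius `r` has `O(r)` points.
Letting `R → ∞` forces `V(n₀) = 0`.
-/

namespace DHKS

open Finset RCLike Filter
open scoped InnerProductSpace

section InnerProduct

variable {𝕜 E : Type*} [RCLike 𝕜] [NormedAddCommGroup E] [InnerProductSpace 𝕜 E]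

lemma re_inner_add_smul_map (A : E →ₗ[𝕜] E) (x y : E) (t : ℝ) :
    re ⟪x + (t : 𝕜) • y, A (x + (t : 𝕜) • y)⟫_𝕜 =
      re ⟪x, A x⟫_𝕜 + t * (re ⟪x, A y⟫_𝕜 + re ⟪y, A x⟫_𝕜) + t ^ 2 * re ⟪y, A y⟫_𝕜 := by
  simp only [map_add, map_smul, inner_add_left, inner_add_right, inner_smul_left,
    inner_smul_right, conj_ofReal, re_ofReal_mul]
  ring

/-- Compare the two forms at `x ± t y` and read off the discriminant in `t`. -/
lemma sq_re_inner_add_re_inner_le {A B : E →ₗ[𝕜] E}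
    (h : ∀ u, |re ⟪u, A u⟫_𝕜| ≤ re ⟪u, B u⟫_𝕜) (x y : E) :
    (re ⟪x, A y⟫_𝕜 + re ⟪y, A x⟫_𝕜) ^ 2 ≤ 4 * re ⟪x, B x⟫_𝕜 * re ⟪y, B y⟫_𝕜 := by
  have hquad : ∀ t : ℝ, 0 ≤ re ⟪y, B y⟫_𝕜 * (t * t) +
      -(re ⟪x, A y⟫_𝕜 + re ⟪y, A x⟫_𝕜) * t + re ⟪x, B x⟫_𝕜 := by
    intro t
    have hplus := (abs_le.1 (h (x + (t : 𝕜) • y))).2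
    have hminus := (abs_le.1 (h (x + ((-t : ℝ) : 𝕜) • y))).1
    rw [re_inner_add_smul_map, re_inner_add_smul_map] at hplus hminus
    nlinarith
  have := discrim_le_zero hquad
  rw [discrim] at this
  linarith

lemma abs_re_inner_le_of_norm_le {T W : E →L[𝕜] E} {r : ℝ} (hadd : ‖T + W‖ ≤ r)
    (hsub : ‖W - T‖ ≤ r) (u : E) :
    |re ⟪u, W u⟫_𝕜| ≤ re ⟪u, ((r : 𝕜) • 1 - T) u⟫_𝕜 := by
  have hbound : ∀ S : E →L[𝕜] E, ‖S‖ ≤ r → |re ⟪u, S u⟫_𝕜| ≤ r * ‖u‖ ^ 2 := fun S hS =>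
    calc |re ⟪u, S u⟫_𝕜| ≤ ‖⟪u, S u⟫_𝕜‖ := abs_re_le_norm _
      _ ≤ ‖u‖ * ‖S u‖ := norm_inner_le_norm _ _
      _ ≤ ‖u‖ * (r * ‖u‖) := by gcongr; exact S.le_of_opNorm_le hS u
      _ = r * ‖u‖ ^ 2 := by ring
  have hadd' := abs_le.1 (hbound _ hadd)
  have hsub' := abs_le.1 (hbound _ hsub)
  simp only [add_apply, sub_apply, smul_apply, one_apply_eq_self, inner_add_right,
    inner_sub_right, inner_smul_right, map_add, map_sub, re_ofReal_mul,
    inner_self_eq_norm_sq] at hadd' hsub' ⊢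
  rw [abs_le]
  constructor <;> linarith

lemma norm_le_of_spectrum_subset_Icc {A : Type*} [CStarAlgebra A] {a : A}
    (ha : IsSelfAdjoint a) {r : ℝ} (hr : 0 ≤ r)
    (h : spectrum ℂ a ⊆ (fun x : ℝ => (x : ℂ)) '' Set.Icc (-r) r) : ‖a‖ ≤ r := by
  have hrad : spectralRadius ℂ a ≤ ENNReal.ofReal r := by
    refine iSup₂_le fun k hk => ?_
    obtain ⟨x, hx, rfl⟩ := h hk
    rw [ENNReal.le_ofReal_iff_toReal_le ENNReal.coe_ne_top hr]
    simpa [abs_le] using hx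
  rw [← ha.toReal_spectralRadius_complex_eq_norm]
  exact ENNReal.toReal_le_of_le_ofReal hr hrad

end InnerProduct

section Translation

variable {G : Type*} [AddGroup G]

def translate (a : G) : L2 G →L[ℂ] L2 G := compOp (· + a) (add_left_injective a)

@[simp] lemma translate_apply (a : G) (u : L2 G) (n : G) :
    (translate a u : G → ℂ) n = (u : G → ℂ) (n + a) := rfl

lemma inner_translate_left (a : G) (u v : L2 G) :
    ⟪translate a u, v⟫_ℂ = ⟪u, translate (-a) v⟫_ℂ := by
  rw [lp.inner_eq_tsum, lp.inner_eq_tsum,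
    ← (Equiv.addRight a).tsum_eq (fun n => ⟪(u : G → ℂ) n, (translate (-a) v : G → ℂ) n⟫_ℂ)]
  simp

lemma star_translate (a : G) : star (translate a) = translate (-a) :=
  ((ContinuousLinearMap.eq_adjoint_iff _ _).2 fun u v => by
    rw [inner_translate_left, neg_neg]).symm

lemma norm_translate (a : G) (u : L2 G) : ‖translate a u‖ = ‖u‖ := by
  have h : ⟪translate a u, translate a u⟫_ℂ = ⟪u, u⟫_ℂ := by
    rw [inner_translate_left]
    congr 1
    ext n
    simp
  rw [norm_eq_sqrt_re_inner (𝕜 := ℂ), norm_eq_sqrt_re_inner (𝕜 := ℂ), h]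

lemma re_inner_translate_neg (a : G) (u : L2 G) :
    re ⟪u, translate (-a) u⟫_ℂ = re ⟪u, translate a u⟫_ℂ := by
  rw [← inner_translate_left, inner_re_symm]

lemma norm_translate_sub_sq (a : G) (u : L2 G) :
    ‖translate a u - u‖ ^ 2 = 2 * ‖u‖ ^ 2 - 2 * re ⟪u, translate a u⟫_ℂ := by
  rw [norm_sub_sq (𝕜 := ℂ), norm_translate, inner_re_symm]
  ring

lemma norm_translate_sub_le (a : G) (u : L2 G) : ‖translate a u - u‖ ≤ 2 * ‖u‖ := by
  linarith [norm_sub_le (translate a u) u, norm_translate a u]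

end Translation

section Lattice

variable {ν : ℕ}

lemma H0_eq_sum_translate :
    H0 ν = ∑ i : Fin ν, (translate (unitVec ν i) + translate (-unitVec ν i)) := rfl

lemma natAbs_le_normOne (m : Zlat ν) (i : Fin ν) : (m i).natAbs ≤ normOne m :=
  Finset.single_le_sum (f := fun k => (m k).natAbs) (fun _ _ => Nat.zero_le _) (mem_univ i)

lemma normOne_zero : normOne (0 : Zlat ν) = 0 := by simp [normOne]

lemma normOne_add_unitVec (m : Zlat ν) (i : Fin ν) :
    normOne (m + unitVec ν i) = normOne m + 1 ∨ normOne (m + unitVec ν i) + 1 = normOne m := by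
  have hrest : ∑ k ∈ univ.erase i, ((m + unitVec ν i) k).natAbs =
      ∑ k ∈ univ.erase i, (m k).natAbs :=
    sum_congr rfl fun k hk => by simp [unitVec, (mem_erase.1 hk).1]
  have hsplit := add_sum_erase univ (fun k => ((m + unitVec ν i) k).natAbs) (mem_univ i)
  have hsplit' := add_sum_erase univ (fun k => (m k).natAbs) (mem_univ i)
  have hi : (m + unitVec ν i) i = m i + 1 := by simp [unitVec]
  simp only [normOne] at hsplit hsplit' ⊢
  omega

lemma neg_one_pow_normOne_add_unitVec (m : Zlat ν) (i : Fin ν) :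
    (-1 : ℝ) ^ normOne (m + unitVec ν i) = -(-1) ^ normOne m := by
  rcases normOne_add_unitVec m i with h | h
  · rw [h, pow_succ, mul_neg_one]
  · rw [← h, pow_succ, mul_neg_one, neg_neg]

lemma neg_one_pow_normOne_sub_unitVec (m : Zlat ν) (i : Fin ν) :
    (-1 : ℝ) ^ normOne (m - unitVec ν i) = -(-1) ^ normOne m := by
  rw [← sub_add_cancel m (unitVec ν i), neg_one_pow_normOne_add_unitVec, add_sub_cancel_right,
    neg_neg]

end Lattice

section Operators

variable {α : Type*} {ν : ℕ}

lemma norm_sq_eq_tsum (u : L2 α) : ‖u‖ ^ 2 = ∑' n, ‖(u : α → ℂ) n‖ ^ 2 := by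
  simpa using lp.norm_rpow_eq_tsum (p := 2) (by norm_num) u

lemma norm_mulOp_le (V : α → ℝ) (C : ℝ) (hC : ∀ n, |V n| ≤ C) : ‖mulOp V C hC‖ ≤ max C 0 :=
  LinearMap.mkContinuous_norm_le _ (le_max_right _ _) _

lemma inner_mulOp_left (V : α → ℝ) (C : ℝ) (hC : ∀ n, |V n| ≤ C) (u v : L2 α) :
    ⟪mulOp V C hC u, v⟫_ℂ = ⟪u, mulOp V C hC v⟫_ℂ := by
  rw [lp.inner_eq_tsum, lp.inner_eq_tsum]
  refine tsum_congr fun n => ?_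
  simp only [mulOp_apply, inner_apply, map_mul, Complex.conj_ofReal]
  ring

lemma isSelfAdjoint_schrodinger (V : Zlat ν → ℝ) (C : ℝ) (hC : ∀ n, |V n| ≤ C) :
    IsSelfAdjoint (schrodinger ν V C hC) := by
  rw [schrodinger, H0_eq_sum_translate]
  refine IsSelfAdjoint.add (isSelfAdjoint_sum _ fun i _ => ?_) ?_
  · rw [IsSelfAdjoint, star_add, star_translate, star_translate, neg_neg, add_comm]
  · exact ((ContinuousLinearMap.eq_adjoint_iff _ _).2 (inner_mulOp_left V C hC)).symm

@[simp] lemma Uop_apply (u : L2 (Zlat ν)) (n : Zlat ν) :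
    (Uop ν u : Zlat ν → ℂ) n = ((-1 : ℝ) ^ normOne n : ℝ) * (u : Zlat ν → ℂ) n := rfl

lemma Uop_Uop (u : L2 (Zlat ν)) : Uop ν (Uop ν u) = u := by
  ext n
  simp only [Uop_apply, ← mul_assoc, ← Complex.ofReal_mul, ← mul_pow]
  norm_num

lemma H0_Uop (u : L2 (Zlat ν)) : H0 ν (Uop ν u) = -Uop ν (H0 ν u) := by
  ext n
  simp only [H0_apply, Uop_apply, neg_one_pow_normOne_add_unitVec,
    neg_one_pow_normOne_sub_unitVec, lp.coeFn_neg, Pi.neg_apply, mul_sum]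
  push_cast
  rw [← sum_neg_distrib]
  exact sum_congr rfl fun i _ => by ring

lemma mulOp_Uop (V : Zlat ν → ℝ) (C : ℝ) (hC : ∀ n, |V n| ≤ C) (u : L2 (Zlat ν)) :
    mulOp V C hC (Uop ν u) = Uop ν (mulOp V C hC u) := by
  ext n
  simp only [mulOp_apply, Uop_apply]
  ring

lemma Uop_mul_schrodinger_mul_Uop (V : Zlat ν → ℝ) (C : ℝ) (hC : ∀ n, |V n| ≤ C) :
    Uop ν * schrodinger ν V C hC * Uop ν = mulOp V C hC - H0 ν := by
  ext1 u
  simp only [schrodinger, mul_apply_eq_comp, add_apply, sub_apply, H0_Uop,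
    mulOp_Uop, map_add, map_neg, Uop_Uop]
  abel

lemma norm_mulOp_sub_H0_le (V : Zlat ν → ℝ) (C : ℝ) (hC : ∀ n, |V n| ≤ C) :
    ‖mulOp V C hC - H0 ν‖ ≤ ‖schrodinger ν V C hC‖ := by
  have hU : ‖Uop ν‖ ≤ 1 := (norm_mulOp_le _ _ _).trans (by norm_num)
  rw [← Uop_mul_schrodinger_mul_Uop]
  calc ‖Uop ν * schrodinger ν V C hC * Uop ν‖
      ≤ ‖Uop ν‖ * ‖schrodinger ν V C hC‖ * ‖Uop ν‖ := norm_mul₃_le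
    _ ≤ 1 * ‖schrodinger ν V C hC‖ * 1 := by gcongr
    _ = ‖schrodinger ν V C hC‖ := by ring

lemma re_inner_two_mul_sub_H0 (u : L2 (Zlat ν)) :
    re ⟪u, (((2 * ν : ℝ) : ℂ) • 1 - H0 ν) u⟫_ℂ =
      ∑ i : Fin ν, ‖translate (unitVec ν i) u - u‖ ^ 2 := by
  have hsmul : re ⟪u, ((2 * ν : ℝ) : ℂ) • u⟫_ℂ = 2 * ν * ‖u‖ ^ 2 := by
    rw [inner_smul_right, ← inner_self_eq_norm_sq (𝕜 := ℂ)]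
    exact re_ofReal_mul _ _
  simp only [sub_apply, smul_apply, one_apply_eq_self, inner_sub_right, map_sub, hsmul,
    H0_eq_sum_translate, _root_.sum_apply, add_apply, inner_sum, inner_add_right, map_sum,
    map_add, re_inner_translate_neg, norm_translate_sub_sq, sum_sub_distrib, sum_const,
    card_univ, Fintype.card_fin, nsmul_eq_mul]
  simp only [← two_mul]
  ring

lemma abs_re_inner_mulOp_le (V : Zlat ν → ℝ) (C : ℝ) (hC : ∀ n, |V n| ≤ C)
    (hH : ‖schrodinger ν V C hC‖ ≤ 2 * ν) (u : L2 (Zlat ν)) :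
    |re ⟪u, mulOp V C hC u⟫_ℂ| ≤ re ⟪u, (((2 * ν : ℝ) : ℂ) • 1 - H0 ν) u⟫_ℂ :=
  abs_re_inner_le_of_norm_le hH ((norm_mulOp_sub_H0_le V C hC).trans hH) u

lemma sum_norm_translate_sub_sq_le (u : L2 (Zlat ν)) :
    ∑ i : Fin ν, ‖translate (unitVec ν i) u - u‖ ^ 2 ≤ 4 * ν * ‖u‖ ^ 2 :=
  calc ∑ i : Fin ν, ‖translate (unitVec ν i) u - u‖ ^ 2
      ≤ ∑ _i : Fin ν, (2 * ‖u‖) ^ 2 :=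
        sum_le_sum fun i _ => pow_le_pow_left₀ (norm_nonneg _) (norm_translate_sub_le _ _) 2
    _ = 4 * ν * ‖u‖ ^ 2 := by simp only [sum_const, card_univ, Fintype.card_fin, nsmul_eq_mul]; ring

lemma re_inner_single_mulOp [DecidableEq α] (V : α → ℝ) (C : ℝ) (hC : ∀ n, |V n| ≤ C) (i : α)
    (u : L2 α) : re ⟪lp.single 2 i (1 : ℂ), mulOp V C hC u⟫_ℂ = V i * re ((u : α → ℂ) i) := by
  rw [lp.inner_single_left]
  simp [inner_apply]

end Operators

section Radial

variable {ν : ℕ}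

def radialProfile (R r : ℕ) : ℝ := ∑ k ∈ Ico r R, 1 / ((k : ℝ) + 1)

lemma radialProfile_zero (R : ℕ) : radialProfile R 0 = ∑ k ∈ range R, 1 / ((k : ℝ) + 1) := by
  rw [radialProfile, range_eq_Ico]

lemma radialProfile_of_le {R r : ℕ} (h : R ≤ r) : radialProfile R r = 0 := by
  rw [radialProfile, Ico_eq_empty_of_le h, sum_empty]

lemma sq_radialProfile_sub_succ_le (R r : ℕ) :
    (radialProfile R r - radialProfile R (r + 1)) ^ 2 ≤ (1 / ((r : ℝ) + 1)) ^ 2 := by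
  rcases lt_or_ge r R with h | h
  · simp only [radialProfile, sum_eq_sum_Ico_succ_bot h, add_sub_cancel_right, le_refl]
  · rw [radialProfile_of_le h, radialProfile_of_le (by omega), sub_zero, zero_pow two_ne_zero]
    positivity

lemma sq_radialProfile_normOne_add_unitVec_sub_le (R : ℕ) (m : Zlat ν) (i : Fin ν) :
    (radialProfile R (normOne (m + unitVec ν i)) - radialProfile R (normOne m)) ^ 2 ≤
      4 * (1 / ((normOne m : ℝ) + 1)) ^ 2 := by
  rcases normOne_add_unitVec m i with h | h
  · rw [h, ← neg_sub, neg_sq]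
    nlinarith [sq_radialProfile_sub_succ_le R (normOne m), sq_nonneg (1 / ((normOne m : ℝ) + 1))]
  · rw [← h]
    set s : ℝ := (normOne (m + unitVec ν i) : ℝ)
    have hs : 0 ≤ s := Nat.cast_nonneg _
    have key : 1 / (s + 1) ≤ 2 / (s + 1 + 1) := by
      rw [div_le_div_iff₀ (by positivity) (by positivity)]
      linarith
    calc (radialProfile R (normOne (m + unitVec ν i)) -
          radialProfile R (normOne (m + unitVec ν i) + 1)) ^ 2
        ≤ (1 / (s + 1)) ^ 2 := sq_radialProfile_sub_succ_le R _
      _ ≤ (2 / (s + 1 + 1)) ^ 2 := pow_le_pow_left₀ (by positivity) key 2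
      _ = 4 * (1 / (((normOne (m + unitVec ν i) + 1 : ℕ) : ℝ) + 1)) ^ 2 := by push_cast; ring

lemma radialProfile_normOne_add_unitVec_sub_eq_zero {R : ℕ} {m : Zlat ν} (hm : R < normOne m)
    (i : Fin ν) :
    radialProfile R (normOne (m + unitVec ν i)) - radialProfile R (normOne m) = 0 := by
  have : R ≤ normOne (m + unitVec ν i) := by rcases normOne_add_unitVec m i with h | h <;> omega
  rw [radialProfile_of_le this, radialProfile_of_le hm.le, sub_zero]

def ballOne (ν R : ℕ) : Finset (Zlat ν) :=
  {m ∈ Fintype.piFinset fun _ => Icc (-(R : ℤ)) R | normOne m ≤ R}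

@[simp] lemma mem_ballOne {R : ℕ} {m : Zlat ν} : m ∈ ballOne ν R ↔ normOne m ≤ R := by
  simp only [ballOne, mem_filter, Fintype.mem_piFinset, mem_Icc, and_iff_right_iff_imp]
  intro h i
  have := natAbs_le_normOne m i
  omega

lemma card_le_of_forall_normOne_eq (hν : ν ≤ 2) {r : ℕ} {t : Finset (Zlat ν)}
    (ht : ∀ m ∈ t, normOne m = r) : #t ≤ 4 * r + 2 := by
  interval_cases ν
  · have := Finset.card_le_one_of_subsingleton t
    omega
  · have hmaps : ∀ m ∈ t, m 0 ∈ Icc (-(r : ℤ)) r := fun m hm => by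
      have := ht m hm
      simp only [normOne, Fin.sum_univ_one] at this
      rw [mem_Icc]
      omega
    have hinj : Set.InjOn (fun m : Zlat 1 => m 0) t := fun a _ b _ hab =>
      funext fun k => by rwa [Subsingleton.elim k 0]
    have := card_le_card_of_injOn _ hmaps hinj
    rw [Int.card_Icc] at this
    omega
  · have hmaps : ∀ m ∈ t, (m 0, decide (0 ≤ m 1)) ∈ Icc (-(r : ℤ)) r ×ˢ (univ : Finset Bool) :=
      fun m hm => by
        have := ht m hm
        simp only [normOne, Fin.sum_univ_two] at this
        simp only [mem_product, mem_Icc, mem_univ, and_true]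
        omega
    have hinj : Set.InjOn (fun m : Zlat 2 => (m 0, decide (0 ≤ m 1))) t := by
      intro a ha b hb hab
      have hra := ht a ha
      have hrb := ht b hb
      simp only [normOne, Fin.sum_univ_two] at hra hrb
      simp only [Prod.mk.injEq, decide_eq_decide] at hab
      have h1 : a 1 = b 1 := by
        by_cases h : 0 ≤ a 1
        · have := hab.2.1 h
          omega
        · have := mt hab.2.2 h
          omega
      funext k
      fin_cases k
      exacts [hab.1, h1]
    have := card_le_card_of_injOn _ hmaps hinj
    rw [card_product, Int.card_Icc, card_univ, Fintype.card_bool] at this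
    omega

lemma sum_ballOne_le (hν : ν ≤ 2) (R : ℕ) {w : ℕ → ℝ} (hw : ∀ r, 0 ≤ w r) :
    ∑ m ∈ ballOne ν R, w (normOne m) ≤ ∑ r ∈ range (R + 1), (4 * r + 2) * w r := by
  rw [← sum_fiberwise_of_maps_to (g := normOne) (t := range (R + 1))
    fun m hm => by simpa [Nat.lt_succ_iff] using hm]
  refine sum_le_sum fun r _ => ?_
  rw [sum_congr rfl fun m hm => by rw [(mem_filter.1 hm).2], sum_const, nsmul_eq_mul]
  gcongr
  · exact hw r
  · exact_mod_cast card_le_of_forall_normOne_eq hν fun m hm => (mem_filter.1 hm).2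

end Radial

section TestVector

variable {ν : ℕ}

def radialVec (n₀ : Zlat ν) (R : ℕ) : L2 (Zlat ν) :=
  ⟨fun n => (radialProfile R (normOne (n - n₀)) : ℂ), by
    refine (memℓp_zero ?_).of_exponent_ge zero_le
    refine ((ballOne ν R).finite_toSet.image (· + n₀)).subset fun n hn =>
      ⟨n - n₀, ?_, sub_add_cancel n n₀⟩
    by_contra h
    simp only [mem_coe, mem_ballOne, not_le] at h
    exact hn (by simp [radialProfile_of_le h.le])⟩

@[simp] lemma radialVec_apply (n₀ : Zlat ν) (R : ℕ) (n : Zlat ν) :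
    (radialVec n₀ R : Zlat ν → ℂ) n = radialProfile R (normOne (n - n₀)) := rfl

lemma norm_translate_radialVec_sub_sq (n₀ : Zlat ν) (R : ℕ) (i : Fin ν) :
    ‖translate (unitVec ν i) (radialVec n₀ R) - radialVec n₀ R‖ ^ 2 =
      ∑' m, (radialProfile R (normOne (m + unitVec ν i)) - radialProfile R (normOne m)) ^ 2 := by
  rw [norm_sq_eq_tsum, ← (Equiv.addRight n₀).tsum_eq]
  refine tsum_congr fun m => ?_
  simp only [Equiv.coe_addRight, lp.coeFn_sub, Pi.sub_apply, translate_apply, radialVec_apply,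
    add_right_comm m n₀, add_sub_cancel_right, ← Complex.ofReal_sub, Complex.norm_real,
    Real.norm_eq_abs, sq_abs]

lemma norm_translate_radialVec_sub_sq_le (hν : ν ≤ 2) (n₀ : Zlat ν) (R : ℕ) (i : Fin ν) :
    ‖translate (unitVec ν i) (radialVec n₀ R) - radialVec n₀ R‖ ^ 2 ≤
      16 * (radialProfile R 0 + 1) := by
  rw [norm_translate_radialVec_sub_sq, tsum_eq_sum (s := ballOne ν R) fun m hm => by
    rw [radialProfile_normOne_add_unitVec_sub_eq_zero (by simpa using hm), zero_pow two_ne_zero]]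
  calc ∑ m ∈ ballOne ν R,
        (radialProfile R (normOne (m + unitVec ν i)) - radialProfile R (normOne m)) ^ 2
      ≤ ∑ m ∈ ballOne ν R, 4 * (1 / ((normOne m : ℝ) + 1)) ^ 2 :=
        sum_le_sum fun m _ => sq_radialProfile_normOne_add_unitVec_sub_le R m i
    _ ≤ ∑ r ∈ range (R + 1), (4 * r + 2) * (4 * (1 / ((r : ℝ) + 1)) ^ 2) :=
        sum_ballOne_le hν R (w := fun r => 4 * (1 / ((r : ℝ) + 1)) ^ 2) fun r => by positivity
    _ ≤ ∑ r ∈ range (R + 1), 16 * (1 / ((r : ℝ) + 1)) := sum_le_sum fun r _ => by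
        rw [div_pow, one_pow, ← mul_assoc, mul_one_div, sq, ← div_div, mul_one_div]
        gcongr
        rw [div_le_iff₀ (by positivity)]
        linarith
    _ = 16 * (radialProfile R 0 + 1 / ((R : ℝ) + 1)) := by
        rw [← mul_sum, sum_range_succ, radialProfile_zero]
    _ ≤ 16 * (radialProfile R 0 + 1) := by
        gcongr
        rw [div_le_one (by positivity)]
        linarith [(Nat.cast_nonneg R : (0 : ℝ) ≤ R)]

lemma sq_radialProfile_mul_le (hν : ν ≤ 2) (V : Zlat ν → ℝ) (C : ℝ) (hC : ∀ n, |V n| ≤ C)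
    (hH : ‖schrodinger ν V C hC‖ ≤ 2 * ν) (n₀ : Zlat ν) (R : ℕ) :
    (radialProfile R 0 * V n₀) ^ 2 ≤ 256 * (radialProfile R 0 + 1) := by
  set c := radialProfile R 0
  set δ : L2 (Zlat ν) := lp.single 2 n₀ 1
  have hc : 0 ≤ c := sum_nonneg fun k _ => by positivity
  have hν' : (ν : ℝ) ≤ 2 := by exact_mod_cast hν
  have hpolar := sq_re_inner_add_re_inner_le (A := (mulOp V C hC : L2 (Zlat ν) →ₗ[ℂ] L2 (Zlat ν)))
    (B := ((((2 * ν : ℝ) : ℂ) • 1 - H0 ν : L2 (Zlat ν) →L[ℂ] L2 (Zlat ν)) :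
      L2 (Zlat ν) →ₗ[ℂ] L2 (Zlat ν))) (abs_re_inner_mulOp_le V C hC hH) (radialVec n₀ R) δ
  simp only [ContinuousLinearMap.coe_coe, re_inner_two_mul_sub_H0] at hpolar
  rw [← inner_mulOp_left, inner_re_symm, re_inner_single_mulOp, radialVec_apply, sub_self,
    normOne_zero, re_to_complex, Complex.ofReal_re] at hpolar
  have hψ : ∑ i : Fin ν, ‖translate (unitVec ν i) (radialVec n₀ R) - radialVec n₀ R‖ ^ 2 ≤
      32 * (c + 1) :=
    calc _ ≤ ∑ _i : Fin ν, 16 * (c + 1) :=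
          sum_le_sum fun i _ => norm_translate_radialVec_sub_sq_le hν n₀ R i
      _ ≤ 32 * (c + 1) := by
          simp only [sum_const, card_univ, Fintype.card_fin, nsmul_eq_mul]
          nlinarith
  have hδ : ∑ i : Fin ν, ‖translate (unitVec ν i) δ - δ‖ ^ 2 ≤ 8 := by
    have := sum_norm_translate_sub_sq_le δ
    rw [lp.norm_single (by norm_num), norm_one] at this
    nlinarith
  have hprod := mul_le_mul hψ hδ (sum_nonneg fun _ _ => by positivity) (by linarith)
  nlinarith

end TestVector

lemma eq_zero_of_forall_sq_mul_le {c : ℕ → ℝ} (hc : Tendsto c atTop atTop) {v K : ℝ}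
    (h : ∀ R, (c R * v) ^ 2 ≤ K * (c R + 1)) : v = 0 := by
  by_contra hv
  have hv2 : 0 < v ^ 2 := by positivity
  obtain ⟨R, hR⟩ := (hc.eventually_ge_atTop (max 1 ((2 * |K| + 1) / v ^ 2))).exists
  have h1 : 1 ≤ c R := le_of_max_le_left hR
  have h2 : 2 * |K| + 1 ≤ c R * v ^ 2 := (div_le_iff₀ hv2).1 (le_of_max_le_right hR)
  have h3 : K * (c R + 1) ≤ |K| * (c R + 1) := by gcongr; exact le_abs_self K
  nlinarith [h R, mul_le_mul_of_nonneg_left h2 (by linarith : (0 : ℝ) ≤ c R),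
    mul_le_mul_of_nonneg_left h1 (abs_nonneg K)]

/-- Theorem 4.5: for `ν ∈ {1,2}`, if `σ(H₀+V) ⊆ [-2ν, 2ν]` then `V = 0`. -/
theorem statement12 (ν : ℕ) (hν : ν = 1 ∨ ν = 2) (V : Zlat ν → ℝ) (C : ℝ)
    (hC : ∀ n, |V n| ≤ C)
    (hspec : spectrum ℂ (schrodinger ν V C hC) ⊆
      (fun x : ℝ => (x : ℂ)) '' Set.Icc (-(2 * (ν:ℝ))) (2 * (ν:ℝ))) :
    ∀ n, V n = 0 := by
  have hH : ‖schrodinger ν V C hC‖ ≤ 2 * ν :=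
    norm_le_of_spectrum_subset_Icc (isSelfAdjoint_schrodinger V C hC) (by positivity) hspec
  intro n₀
  refine eq_zero_of_forall_sq_mul_le (c := fun R => radialProfile R 0) ?_
    (sq_radialProfile_mul_le (by omega) V C hC hH n₀)
  simpa only [radialProfile_zero] using Real.tendsto_sum_range_one_div_nat_succ_atTop

end DHKS
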